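/- arXiv:1712.02922 — 3 statements merged into one kernel-verified Lean document; each statement's English description precedes it below -/
import Mathlib

section
/- Let p(x) = x^n + p₁x^{n−1} + ⋯ + pₙ be a monic polynomial over a commutative ring, define p_j = 0 for j > n, and let h_k be determined by Newton's identities: h₀ = n, h₁ = −p₁, and h_j = −j·p_j − Σ_{k=1}^{j−1} p_k h_{j−k} for j ≥ 2. Let H = (h_{i+j})_{i,j=0}^{n−1} be the Hankel matrix and C the companion matrix of p. Then H·C = C^T·H. -/
open Matrix

private theorem key {R : Type*} [CommRing R] (n : ℕ) (c h : ℕ → R)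
    (hn : 0 < n)
    (hc : ∀ j, n < j → c j = 0)
    (h0 : h 0 = (n : R))
    (hrec : ∀ j, 1 ≤ j →
      h j = -(j : R) * c j - ∑ k ∈ Finset.Ico 1 j, c k * h (j - k)) :
    ∀ t : ℕ, h (t + n) = -∑ k ∈ Finset.range n, c (n - k) * h (t + k) := by
  intro t
  rw [hrec (t + n) (by omega)]
  have e1 : ∑ k ∈ Finset.Ico 1 (t + n + 1), c k * h (t + n - k)
      = (∑ k ∈ Finset.Ico 1 (t + n), c k * h (t + n - k)) + c (t+n) * h 0 := by
    rw [Finset.sum_Ico_succ_top (by omega)]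
    simp
  have e2 : ∑ k ∈ Finset.Ico 1 (t + n + 1), c k * h (t + n - k)
      = ∑ k ∈ Finset.Ico 1 (n + 1), c k * h (t + n - k) := by
    rw [← Finset.sum_Ico_consecutive _ (by omega : 1 ≤ n+1) (by omega : n+1 ≤ t+n+1)]
    have hz : ∑ k ∈ Finset.Ico (n+1) (t+n+1), c k * h (t+n-k) = 0 :=
      Finset.sum_eq_zero fun k hk => by
        have := (Finset.mem_Ico.mp hk).1
        rw [hc k (by omega)]; ring
    rw [hz, add_zero]
  have e3 : ∑ k ∈ Finset.Ico 1 (n + 1), c k * h (t + n - k)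
      = ∑ k ∈ Finset.range n, c (n - k) * h (t + k) := by
    rw [Finset.sum_Ico_eq_sum_range, ← Finset.sum_range_reflect]
    refine Finset.sum_congr (by simp) fun k hk => ?_
    have hk' := Finset.mem_range.mp hk
    congr 1
    · congr 1; omega
    · congr 1; omega
  have htc : (t : R) * c (t + n) = 0 := by
    rcases t with _ | t
    · simp
    · rw [hc _ (by omega)]; ring
  have := e1.symm.trans e2
  rw [e3] at this
  have hsum : ∑ k ∈ Finset.Ico 1 (t + n), c k * h (t + n - k)
      = (∑ k ∈ Finset.range n, c (n - k) * h (t + k)) - c (t+n) * h 0 := by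
    linear_combination this
  rw [hsum, h0]
  push_cast
  linear_combination -htc

/-- If `h` is determined from the coefficients of a monic polynomial by Newton's
identities (with `p_j = 0` for `j > n`), then the Hankel matrix `H = (h_{i+j})`
and the companion matrix `C` satisfy `H C = Cᵀ H`. -/
theorem hankel_companion_intertwine {R : Type*} [CommRing R] (n : ℕ) (c h : ℕ → R)
    (hc : ∀ j, n < j → c j = 0)
    (h0 : h 0 = (n : R))
    (hrec : ∀ j, 1 ≤ j →
      h j = -(j : R) * c j - ∑ k ∈ Finset.Ico 1 j, c k * h (j - k)) :
    (Matrix.of fun i j : Fin n => h ((i : ℕ) + (j : ℕ))) *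
      (Matrix.of fun i j : Fin n =>
        (if (i : ℕ) = (j : ℕ) + 1 then (1 : R) else 0) +
        (if (j : ℕ) = n - 1 then -c (n - (i : ℕ)) else 0)) =
    (Matrix.of fun i j : Fin n =>
        (if (i : ℕ) = (j : ℕ) + 1 then (1 : R) else 0) +
        (if (j : ℕ) = n - 1 then -c (n - (i : ℕ)) else 0))ᵀ *
      (Matrix.of fun i j : Fin n => h ((i : ℕ) + (j : ℕ))) := by
  ext i j
  have hn : 0 < n := i.pos
  have key' := key n c h hn hc h0 hrec
  have hi' : (i : ℕ) < n := i.isLt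
  have hj' : (j : ℕ) < n := j.isLt
  simp only [mul_apply, of_apply, transpose_apply]
  rw [Fin.sum_univ_eq_sum_range (fun k => h (↑i + k) *
        ((if k = ↑j + 1 then (1:R) else 0) + (if (j:ℕ) = n - 1 then -c (n - k) else 0))),
      Fin.sum_univ_eq_sum_range (fun k =>
        ((if k = ↑i + 1 then (1:R) else 0) + (if (i:ℕ) = n - 1 then -c (n - k) else 0)) * h (k + ↑j))]
  by_cases hj : (j:ℕ) = n - 1 <;> by_cases hi : (i:ℕ) = n - 1 <;>
    simp only [hj, hi, eq_self_iff_true, if_true, if_false, mul_add, add_mul, mul_ite, ite_mul,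
      mul_one, one_mul, mul_zero, zero_mul, Finset.sum_add_distrib, Finset.sum_const_zero,
      Finset.sum_ite_eq', Finset.mem_range, add_zero, zero_add]
  · -- i = j = n-1
    rw [if_neg (by omega), if_neg (by omega), zero_add, zero_add]
    exact Finset.sum_congr rfl fun k _ => by rw [Nat.add_comm k]; ring
  · -- j = n-1, i ≠ n-1
    rw [if_neg (by omega), if_pos (by omega), zero_add]
    have e : ∑ x ∈ Finset.range n, h (↑i + x) * -c (n - x)
        = -∑ x ∈ Finset.range n, c (n - x) * h (↑i + x) := by
      rw [← Finset.sum_neg_distrib]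
      exact Finset.sum_congr rfl fun k _ => by ring
    rw [e, ← key' ↑i]
    congr 1
    omega
  · -- i = n-1, j ≠ n-1
    rw [if_pos (by omega), if_neg (by omega), zero_add]
    have e : ∑ x ∈ Finset.range n, -c (n - x) * h (x + ↑j)
        = -∑ x ∈ Finset.range n, c (n - x) * h (↑j + x) := by
      rw [← Finset.sum_neg_distrib]
      exact Finset.sum_congr rfl fun k _ => by rw [Nat.add_comm k]; ring
    rw [e, ← key' ↑j]
    congr 1
    omega
  · rw [if_pos (by omega), if_pos (by omega)]
    congr 1
    omega
end

section
/- Let λ₁ ≥ λ₂, μ₁ ≥ μ₂, ν₁ ≥ ν₂ be real numbers with λ₁+λ₂+μ₁+μ₂ = ν₁+ν₂. Then there exist 2×2 Hermitian matrices A, B with σ(A) = (λ₁,λ₂), σ(B) = (μ₁,μ₂), σ(A+B) = (ν₁,ν₂) if and only if max{λ₁+μ₂, λ₂+μ₁} ≤ ν₁ ≤ λ₁+μ₁. -/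
/-!
The traceless part of a Hermitian `2 × 2` matrix is a vector in `ℝ × ℂ ≅ ℝ³` whose Euclidean
norm is the gap between the two eigenvalues, and it depends additively on the matrix. Once the
traces match, Horn's inequalities say exactly that the gaps of `A`, `B` and `A + B` satisfy the
triangle inequalities. Necessity is then the triangle inequality in `ℝ³`; for sufficiency, realize
a triangle with the three gaps as side lengths in `ℂ` and use its sides as off-diagonal entries.
-/

open Polynomial

namespace Matrix

theorem charpoly_fin_two_eq_iff {R : Type*} [CommRing R] [Nontrivial R]
    (M : Matrix (Fin 2) (Fin 2) R) (a b : R) :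
    M.charpoly = (X - C a) * (X - C b) ↔ M.trace = a + b ∧ M.det = a * b := by
  have h : (X - C a) * (X - C b) = X ^ 2 - C (a + b) * X + C (a * b) := by
    simp only [map_add, map_mul]; ring
  rw [charpoly_fin_two, h]
  refine ⟨fun h => ⟨?_, by simpa using congrArg (coeff · 0) h⟩, fun ⟨ht, hd⟩ => by rw [ht, hd]⟩
  have h₁ : -M.trace = -b + -a := by simpa using congrArg (coeff · 1) h
  linear_combination -h₁

def pauliVector (M : Matrix (Fin 2) (Fin 2) ℂ) : WithLp 2 (ℝ × ℂ) :=
  WithLp.toLp 2 ((M 0 0 - M 1 1).re, 2 * M 0 1)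

theorem pauliVector_add (M N : Matrix (Fin 2) (Fin 2) ℂ) :
    pauliVector (M + N) = pauliVector M + pauliVector N := by
  simp only [pauliVector, add_apply, ← WithLp.toLp_add, Prod.mk_add_mk]
  congr 2
  · simp only [Complex.add_re, Complex.sub_re]; ring
  · ring

theorem IsHermitian.norm_pauliVector_sq {M : Matrix (Fin 2) (Fin 2) ℂ} (hM : M.IsHermitian) :
    ((‖pauliVector M‖ ^ 2 : ℝ) : ℂ) = M.trace ^ 2 - 4 * M.det := by
  have hnorm : ‖pauliVector M‖ ^ 2 = ((M 0 0).re - (M 1 1).re) ^ 2 + 4 * ‖M 0 1‖ ^ 2 := by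
    simp only [pauliVector, WithLp.prod_norm_sq_eq_of_L2, WithLp.toLp_fst, WithLp.toLp_snd,
      Real.norm_eq_abs, sq_abs, Complex.sub_re, Complex.norm_mul, Complex.norm_ofNat, mul_pow]
    norm_num
  have h₀₀ : ((M 0 0).re : ℂ) = M 0 0 := hM.coe_re_apply_self 0
  have h₁₁ : ((M 1 1).re : ℂ) = M 1 1 := hM.coe_re_apply_self 1
  have h₁₀ : star (M 0 1) = M 1 0 := hM.apply 1 0
  rw [hnorm, trace_fin_two, det_fin_two, ← h₁₀, Complex.sq_norm]
  push_cast
  rw [h₀₀, h₁₁, ← Complex.mul_conj, RCLike.star_def]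
  ring

theorem IsHermitian.charpoly_eq_iff {M : Matrix (Fin 2) (Fin 2) ℂ} (hM : M.IsHermitian)
    {a b : ℝ} (hab : b ≤ a) :
    M.charpoly = (X - C (a : ℂ)) * (X - C (b : ℂ)) ↔
      M.trace = a + b ∧ ‖pauliVector M‖ = a - b := by
  rw [charpoly_fin_two_eq_iff]
  refine and_congr_right fun htr => ?_
  have hsq := hM.norm_pauliVector_sq
  rw [htr] at hsq
  rw [← sq_eq_sq₀ (norm_nonneg _) (sub_nonneg.2 hab), ← Complex.ofReal_inj, hsq]
  push_cast
  constructor <;> intro h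
  · linear_combination -4 * h
  · linear_combination (-1 / 4 : ℂ) * h

noncomputable def scalarOffDiag (s : ℝ) (z : ℂ) : Matrix (Fin 2) (Fin 2) ℂ :=
  !![(s : ℂ), z / 2; star z / 2, s]

theorem isHermitian_scalarOffDiag (s : ℝ) (z : ℂ) : (scalarOffDiag s z).IsHermitian := by
  ext i j
  fin_cases i <;> fin_cases j <;> simp [scalarOffDiag]

theorem trace_scalarOffDiag (s : ℝ) (z : ℂ) : (scalarOffDiag s z).trace = 2 * s := by
  rw [scalarOffDiag, trace_fin_two_of]; ring

theorem norm_pauliVector_scalarOffDiag (s : ℝ) (z : ℂ) :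
    ‖pauliVector (scalarOffDiag s z)‖ = ‖z‖ := by
  simp [pauliVector, scalarOffDiag, mul_div_cancel₀]

theorem scalarOffDiag_add (s t : ℝ) (z w : ℂ) :
    scalarOffDiag s z + scalarOffDiag t w = scalarOffDiag (s + t) (z + w) := by
  ext i j
  fin_cases i <;> fin_cases j <;> simp [scalarOffDiag] <;> ring

theorem charpoly_scalarOffDiag {s : ℝ} {z : ℂ} {a b : ℝ} (hs : 2 * s = a + b)
    (hz : ‖z‖ = a - b) : (scalarOffDiag s z).charpoly = (X - C (a : ℂ)) * (X - C (b : ℂ)) := by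
  rw [(isHermitian_scalarOffDiag s z).charpoly_eq_iff (by linarith [norm_nonneg z]),
    trace_scalarOffDiag, norm_pauliVector_scalarOffDiag, hz]
  exact ⟨mod_cast hs, rfl⟩

end Matrix

theorem Complex.exists_norm_eq_and_norm_ofReal_add_eq {a b c : ℝ} (h₁ : |a - b| ≤ c)
    (h₂ : c ≤ a + b) : ∃ z : ℂ, ‖z‖ = b ∧ ‖(a : ℂ) + z‖ = c := by
  obtain ⟨hba, hab⟩ := abs_le.1 h₁
  have hb : 0 ≤ b := by linarith
  rcases (show 0 ≤ a by linarith).eq_or_lt with rfl | ha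
  · exact ⟨b, by simp [hb], by simp [abs_of_nonneg hb]; linarith⟩
  -- `x` is the real part of `z`, given by the law of cosines
  set x := (c ^ 2 - a ^ 2 - b ^ 2) / (2 * a) with hx
  have hax : 2 * a * x = c ^ 2 - a ^ 2 - b ^ 2 := by rw [hx]; field_simp
  have hxb : x ^ 2 ≤ b ^ 2 := by
    have h : (2 * a) ^ 2 * x ^ 2 ≤ (2 * a) ^ 2 * b ^ 2 := by
      rw [← mul_pow, ← mul_pow, hax]
      exact sq_le_sq' (by nlinarith) (by nlinarith)
    exact le_of_mul_le_mul_left h (by positivity)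
  have hy : √(b ^ 2 - x ^ 2) ^ 2 = b ^ 2 - x ^ 2 := Real.sq_sqrt (sub_nonneg.2 hxb)
  refine ⟨⟨x, √(b ^ 2 - x ^ 2)⟩, ?_, ?_⟩
  · rw [← sq_eq_sq₀ (norm_nonneg _) hb, Complex.sq_norm, Complex.normSq_mk, ← sq, ← sq, hy]
    ring
  · rw [← sq_eq_sq₀ (norm_nonneg _) (by linarith), Complex.sq_norm, Complex.normSq_apply]
    simp only [Complex.add_re, Complex.add_im, Complex.ofReal_re, Complex.ofReal_im, zero_add]
    rw [← sq, ← sq, hy]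
    linear_combination hax

theorem horn_inequalities_iff_gap_triangle {l₁ l₂ m₁ m₂ v₁ v₂ : ℝ}
    (htr : l₁ + l₂ + m₁ + m₂ = v₁ + v₂) :
    (max (l₁ + m₂) (l₂ + m₁) ≤ v₁ ∧ v₁ ≤ l₁ + m₁) ↔
      (|(l₁ - l₂) - (m₁ - m₂)| ≤ v₁ - v₂ ∧ v₁ - v₂ ≤ (l₁ - l₂) + (m₁ - m₂)) := by
  rw [max_le_iff, abs_le]
  constructor
  · rintro ⟨⟨h₁, h₂⟩, h₃⟩; refine ⟨⟨?_, ?_⟩, ?_⟩ <;> linarith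
  · rintro ⟨⟨h₁, h₂⟩, h₃⟩; refine ⟨⟨?_, ?_⟩, ?_⟩ <;> linarith

open Matrix

/-- Horn's problem for `n = 2`: given `λ₁ ≥ λ₂`, `μ₁ ≥ μ₂`, `ν₁ ≥ ν₂` with
`λ₁+λ₂+μ₁+μ₂ = ν₁+ν₂`, Hermitian `2×2` matrices `A`, `B` with spectra
`(λ₁,λ₂)`, `(μ₁,μ₂)`, `(ν₁,ν₂)` (for `A`, `B`, `A+B`) exist iff
`max{λ₁+μ₂, λ₂+μ₁} ≤ ν₁ ≤ λ₁+μ₁`. -/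
theorem horn_two_by_two (l₁ l₂ m₁ m₂ v₁ v₂ : ℝ)
    (hl : l₂ ≤ l₁) (hm : m₂ ≤ m₁) (hv : v₂ ≤ v₁)
    (htr : l₁ + l₂ + m₁ + m₂ = v₁ + v₂) :
    (∃ A B : Matrix (Fin 2) (Fin 2) ℂ, A.IsHermitian ∧ B.IsHermitian ∧
        A.charpoly = (X - C (l₁ : ℂ)) * (X - C (l₂ : ℂ)) ∧
        B.charpoly = (X - C (m₁ : ℂ)) * (X - C (m₂ : ℂ)) ∧
        (A + B).charpoly = (X - C (v₁ : ℂ)) * (X - C (v₂ : ℂ))) ↔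
      (max (l₁ + m₂) (l₂ + m₁) ≤ v₁ ∧ v₁ ≤ l₁ + m₁) := by
  rw [horn_inequalities_iff_gap_triangle htr]
  constructor
  · rintro ⟨A, B, hA, hB, hcA, hcB, hcS⟩
    rw [hA.charpoly_eq_iff hl] at hcA
    rw [hB.charpoly_eq_iff hm] at hcB
    rw [(hA.add hB).charpoly_eq_iff hv, pauliVector_add] at hcS
    rw [← hcA.2, ← hcB.2, ← hcS.2]
    refine ⟨?_, norm_add_le _ _⟩
    simpa using abs_norm_sub_norm_le (pauliVector A) (-pauliVector B)
  · rintro ⟨h₁, h₂⟩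
    obtain ⟨z, hz, hSz⟩ := Complex.exists_norm_eq_and_norm_ofReal_add_eq h₁ h₂
    refine ⟨scalarOffDiag ((l₁ + l₂) / 2) (l₁ - l₂ : ℝ), scalarOffDiag ((m₁ + m₂) / 2) z,
      isHermitian_scalarOffDiag _ _, isHermitian_scalarOffDiag _ _,
      charpoly_scalarOffDiag (by ring) ?_, charpoly_scalarOffDiag (by ring) hz, ?_⟩
    · rw [Complex.norm_real, Real.norm_of_nonneg (sub_nonneg.2 hl)]
    · rw [scalarOffDiag_add]
      exact charpoly_scalarOffDiag (by linarith) hSz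
end

section
/- Let H(y) be a matrix polynomial with values (for each real y) in real symmetric n×n matrices, and C(y) the companion matrix of a monic polynomial p(x,y) = x^n + p₁(y)x^{n−1} + ⋯ + pₙ(y). Suppose H(y)C(y) = C(y)^T H(y) for all y, and H(y) = Q(y)^* Q(y) with Q(y) invertible for a given real y. Then M(y) := Q(y)C(y)Q(y)^{-1} is Hermitian and det(xI − M(y)) = p(x,y). -/
/-!
Because the companion matrix `C` has real entries, `Cᴴ = Cᵀ`, so with `H = Qᴴ Q` the relation
`H C = Cᵀ H` reads `Qᴴ Q C = Cᴴ Qᴴ Q`; multiplying by `Q⁻¹ᴴ` on the left and `Q⁻¹` on the right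
gives `(Q C Q⁻¹)ᴴ = Q C Q⁻¹`. Conjugation does not change the characteristic polynomial, and that
of `C` is `p`, since `C` is the matrix of multiplication by `x` on `R[x]/(p)` in the basis
`1, x, …, xⁿ⁻¹`.
-/

open Matrix Polynomial

namespace Polynomial

variable {R : Type*} [CommRing R]

noncomputable def monicOfCoeffs (n : ℕ) (c : ℕ → R) : R[X] :=
  X ^ n + ∑ j ∈ Finset.Icc 1 n, C (c j) * X ^ (n - j)

theorem degree_sum_C_mul_X_pow_sub_lt (n : ℕ) (c : ℕ → R) :
    (∑ j ∈ Finset.Icc 1 n, C (c j) * X ^ (n - j)).degree < (n : WithBot ℕ) := by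
  refine (degree_sum_le _ _).trans_lt <| (Finset.sup_lt_iff (WithBot.bot_lt_coe n)).2 fun j hj => ?_
  obtain ⟨hj1, hjn⟩ := Finset.mem_Icc.1 hj
  exact (degree_C_mul_X_pow_le _ _).trans_lt (WithBot.coe_lt_coe.2 (Nat.sub_lt_of_pos_le hj1 hjn))

theorem monic_monicOfCoeffs (n : ℕ) (c : ℕ → R) : (monicOfCoeffs n c).Monic :=
  monic_X_pow_add (degree_sum_C_mul_X_pow_sub_lt n c)

theorem natDegree_monicOfCoeffs [Nontrivial R] (n : ℕ) (c : ℕ → R) :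
    (monicOfCoeffs n c).natDegree = n := by
  have hlow := degree_sum_C_mul_X_pow_sub_lt n c
  rw [← degree_X_pow (R := R)] at hlow
  rw [monicOfCoeffs, natDegree_add_eq_left_of_degree_lt hlow, natDegree_X_pow]

theorem coeff_monicOfCoeffs_of_lt {n i : ℕ} (c : ℕ → R) (hi : i < n) :
    (monicOfCoeffs n c).coeff i = c (n - i) := by
  simp only [monicOfCoeffs, coeff_add, coeff_X_pow, finsetSum_coeff, coeff_C_mul_X_pow]
  rw [if_neg hi.ne, zero_add, Finset.sum_eq_single_of_mem (n - i) (Finset.mem_Icc.2 (by omega)),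
    if_pos (by omega)]
  intro j hj hji
  rw [if_neg (by rw [Finset.mem_Icc] at hj; omega)]

theorem X_pow_natDegree_modByMonic [Nontrivial R] {p : R[X]} (hp : p.Monic) :
    X ^ p.natDegree %ₘ p = X ^ p.natDegree - p := by
  have hdeg : (X ^ p.natDegree - p).degree < p.degree := by
    have := degree_sub_lt_left (p := X ^ p.natDegree) (q := p)
      (by rw [degree_X_pow, degree_eq_natDegree hp.ne_zero]) (monic_X_pow _).ne_zero
      (by rw [(monic_X_pow _).leadingCoeff, hp.leadingCoeff])
    rwa [degree_X_pow, ← degree_eq_natDegree hp.ne_zero] at this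
  rw [← sub_zero (X ^ p.natDegree %ₘ p), ← modByMonic_self hp, ← sub_modByMonic,
    (modByMonic_eq_self_iff hp).2 hdeg]

end Polynomial

namespace AdjoinRoot

variable {R : Type*} [CommRing R] [Nontrivial R] {g : R[X]}

theorem leftMulMatrix_root_apply (hg : g.Monic) (i j : Fin g.natDegree) :
    Algebra.leftMulMatrix (powerBasisAux' hg) (root g) i j =
      (if (i : ℕ) = (j : ℕ) + 1 then 1 else 0) +
        (if (j : ℕ) = g.natDegree - 1 then -g.coeff i else 0) := by
  have hbasis : powerBasisAux' hg j = root g ^ (j : ℕ) := (powerBasis' hg).basis_eq_pow j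
  rw [Algebra.leftMulMatrix_eq_repr_mul, hbasis, ← pow_succ', ← mk_X, ← map_pow,
    powerBasisAux'_repr_apply_to_fun, modByMonicHom_mk]
  obtain hj | hj : (j : ℕ) + 1 < g.natDegree ∨ (j : ℕ) + 1 = g.natDegree := by omega
  · rw [(modByMonic_eq_self_iff hg).2 (by rwa [degree_X_pow, degree_eq_natDegree hg.ne_zero,
      Nat.cast_lt]), coeff_X_pow, if_neg (show (j : ℕ) ≠ g.natDegree - 1 by omega), add_zero]
  · rw [hj, X_pow_natDegree_modByMonic hg, coeff_sub, coeff_X_pow, if_neg i.isLt.ne,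
      if_pos (show (j : ℕ) = g.natDegree - 1 by omega), zero_sub, zero_add]

/-- Cayley–Hamilton makes `g` divide the characteristic polynomial, and both are monic of the
same degree. -/
theorem charpoly_leftMulMatrix_root (hg : g.Monic) :
    (Algebra.leftMulMatrix (powerBasisAux' hg) (root g)).charpoly = g := by
  have hroot : aeval (root g) (Algebra.leftMulMatrix (powerBasisAux' hg) (root g)).charpoly = 0 :=
    Algebra.leftMulMatrix_injective (powerBasisAux' hg) <| by
      rw [← aeval_algHom_apply, aeval_self_charpoly, map_zero]
  rw [aeval_eq, mk_eq_zero] at hroot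
  refine eq_of_monic_of_dvd_of_natDegree_le hg (charpoly_monic _) hroot ?_
  rw [charpoly_natDegree_eq_dim, Fintype.card_fin]

end AdjoinRoot

namespace Matrix

variable {R : Type*} [CommRing R]

def companion (n : ℕ) (c : ℕ → R) : Matrix (Fin n) (Fin n) R :=
  of fun i j =>
    (if (i : ℕ) = (j : ℕ) + 1 then 1 else 0) + (if (j : ℕ) = n - 1 then -c (n - i) else 0)

theorem companion_eq_reindex_leftMulMatrix_root [Nontrivial R] (n : ℕ) (c : ℕ → R) :
    companion n c =
      reindex (finCongr (natDegree_monicOfCoeffs n c)) (finCongr (natDegree_monicOfCoeffs n c))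
        (Algebra.leftMulMatrix (AdjoinRoot.powerBasisAux' (monic_monicOfCoeffs n c))
          (AdjoinRoot.root (monicOfCoeffs n c))) := by
  ext i j
  rw [reindex_apply, submatrix_apply, AdjoinRoot.leftMulMatrix_root_apply]
  simp [companion, coeff_monicOfCoeffs_of_lt c i.isLt, natDegree_monicOfCoeffs]

theorem charpoly_companion [Nontrivial R] (n : ℕ) (c : ℕ → R) :
    (companion n c).charpoly = monicOfCoeffs n c := by
  rw [companion_eq_reindex_leftMulMatrix_root, charpoly_reindex,
    AdjoinRoot.charpoly_leftMulMatrix_root]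

theorem conjTranspose_companion [StarRing R] {n : ℕ} {c : ℕ → R} (hc : ∀ k, IsSelfAdjoint (c k)) :
    (companion n c)ᴴ = (companion n c)ᵀ := by
  ext i j
  simp [companion, apply_ite star, (hc _).star_eq]

theorem charpoly_mul_mul_inv {n : Type*} [Fintype n] [DecidableEq n] {Q : Matrix n n R}
    (hQ : IsUnit Q.det) (A : Matrix n n R) : (Q * A * Q⁻¹).charpoly = A.charpoly := by
  rw [charpoly_mul_comm, ← Matrix.mul_assoc, nonsing_inv_mul _ hQ, Matrix.one_mul]

theorem isHermitian_mul_mul_inv [StarRing R] {n : Type*} [Fintype n] [DecidableEq n]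
    {Q A : Matrix n n R} (hQ : IsUnit Q.det) (h : Qᴴ * Q * A = Aᴴ * (Qᴴ * Q)) :
    (Q * A * Q⁻¹).IsHermitian := by
  have hA : Aᴴ * Qᴴ = Qᴴ * (Q * A * Q⁻¹) := by
    calc Aᴴ * Qᴴ = Aᴴ * (Qᴴ * Q) * Q⁻¹ := by
          rw [Matrix.mul_assoc, Matrix.mul_assoc, mul_nonsing_inv _ hQ, Matrix.mul_one]
      _ = Qᴴ * (Q * A * Q⁻¹) := by rw [← h]; simp only [Matrix.mul_assoc]
  calc (Q * A * Q⁻¹)ᴴ = Q⁻¹ᴴ * (Aᴴ * Qᴴ) := by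
        rw [conjTranspose_mul, conjTranspose_mul]
    _ = (Q * Q⁻¹)ᴴ * (Q * A * Q⁻¹) := by rw [hA, ← Matrix.mul_assoc, conjTranspose_mul]
    _ = Q * A * Q⁻¹ := by rw [mul_nonsing_inv _ hQ, conjTranspose_one, Matrix.one_mul]

end Matrix

theorem companion_conjugate_hermitian_general (n : ℕ) (c : ℕ → ℝ)
    (H Q : Matrix (Fin n) (Fin n) ℂ)
    (hHQ : H = Qᴴ * Q) (hQ : IsUnit Q.det)
    (hint : H * (Matrix.of fun i j : Fin n =>
        (if (i : ℕ) = (j : ℕ) + 1 then (1 : ℂ) else 0) +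
        (if (j : ℕ) = n - 1 then -((c (n - (i : ℕ)) : ℝ) : ℂ) else 0)) =
      (Matrix.of fun i j : Fin n =>
        (if (i : ℕ) = (j : ℕ) + 1 then (1 : ℂ) else 0) +
        (if (j : ℕ) = n - 1 then -((c (n - (i : ℕ)) : ℝ) : ℂ) else 0))ᵀ * H) :
    (Q * (Matrix.of fun i j : Fin n =>
        (if (i : ℕ) = (j : ℕ) + 1 then (1 : ℂ) else 0) +
        (if (j : ℕ) = n - 1 then -((c (n - (i : ℕ)) : ℝ) : ℂ) else 0)) * Q⁻¹).IsHermitian ∧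
    (Q * (Matrix.of fun i j : Fin n =>
        (if (i : ℕ) = (j : ℕ) + 1 then (1 : ℂ) else 0) +
        (if (j : ℕ) = n - 1 then -((c (n - (i : ℕ)) : ℝ) : ℂ) else 0)) * Q⁻¹).charpoly =
      X ^ n + ∑ j ∈ Finset.Icc 1 n, C ((c j : ℂ)) * X ^ (n - j) := by
  change H * companion n (fun k => (c k : ℂ)) = (companion n (fun k => (c k : ℂ)))ᵀ * H at hint
  change (Q * companion n (fun k => (c k : ℂ)) * Q⁻¹).IsHermitian ∧
    (Q * companion n (fun k => (c k : ℂ)) * Q⁻¹).charpoly = monicOfCoeffs n (fun k => (c k : ℂ))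
  have hreal : (companion n (fun k => (c k : ℂ)))ᴴ = (companion n (fun k => (c k : ℂ)))ᵀ :=
    conjTranspose_companion fun k => Complex.conj_ofReal (c k)
  refine ⟨isHermitian_mul_mul_inv hQ ?_, ?_⟩
  · rw [hreal, ← hHQ, hint]
  · rw [charpoly_mul_mul_inv hQ, charpoly_companion]

/-- If the real symmetric matrix `H` intertwines the companion matrix `C` of a
monic polynomial (`H C = Cᵀ H`) and `H = Qᴴ Q` with `Q` invertible, then
`M = Q C Q⁻¹` is Hermitian and `det(xI - M)` is the monic polynomial. -/
theorem companion_conjugate_hermitian (n : ℕ) (c : ℕ → ℝ)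
    (H Q : Matrix (Fin n) (Fin n) ℂ)
    (hHreal : ∀ i j, (H i j).im = 0) (hHsymm : Hᵀ = H)
    (hHQ : H = Qᴴ * Q) (hQ : IsUnit Q.det)
    (hint : H * (Matrix.of fun i j : Fin n =>
        (if (i : ℕ) = (j : ℕ) + 1 then (1 : ℂ) else 0) +
        (if (j : ℕ) = n - 1 then -((c (n - (i : ℕ)) : ℝ) : ℂ) else 0)) =
      (Matrix.of fun i j : Fin n =>
        (if (i : ℕ) = (j : ℕ) + 1 then (1 : ℂ) else 0) +
        (if (j : ℕ) = n - 1 then -((c (n - (i : ℕ)) : ℝ) : ℂ) else 0))ᵀ * H) :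
    (Q * (Matrix.of fun i j : Fin n =>
        (if (i : ℕ) = (j : ℕ) + 1 then (1 : ℂ) else 0) +
        (if (j : ℕ) = n - 1 then -((c (n - (i : ℕ)) : ℝ) : ℂ) else 0)) * Q⁻¹).IsHermitian ∧
    (Q * (Matrix.of fun i j : Fin n =>
        (if (i : ℕ) = (j : ℕ) + 1 then (1 : ℂ) else 0) +
        (if (j : ℕ) = n - 1 then -((c (n - (i : ℕ)) : ℝ) : ℂ) else 0)) * Q⁻¹).charpoly =
      X ^ n + ∑ j ∈ Finset.Icc 1 n, C ((c j : ℂ)) * X ^ (n - j) :=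
  companion_conjugate_hermitian_general n c H Q hHQ hQ hint
end
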